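/- For n ≥ 3 and 1 < k < n, |P_{n,k}| = (cos(π/n) + sin(π/n)·cot((k-1)π/n)) · φ_{n,k} = ∫₀^∞ (1 + t^n)^{-k/n} dt, where the middle expression is positive for 1 < k < n. -/

import Mathlib

/-!
Both integrals are Beta integrals: substituting `y = x ^ n` gives `n φ = B(1/n, b)`, and
substituting `u = t ^ n`, then `u = s / (1 - s)`, gives `n ∫₀^∞ (1 + t^n)^(-k/n) dt = B(1/n, c)`,
where `b = 1 - k/n`, `c = (k-1)/n` and `1/n + b + c = 1`. In terms of Gamma the quotient of the
two is `Γ(c)Γ(1-c) / (Γ(b)Γ(1-b))`, which Euler's reflection formula turns into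
`sin(πb) / sin(πc)`; since `π/n + πc = π - πb`, the addition formula for sine rewrites this as
`cos(π/n) + sin(π/n) cot((k-1)π/n)`.
-/

open MeasureTheory Set Real

theorem integral_Ioo_rpow_mul_one_sub_rpow {a b : ℝ} (ha : 0 < a) (hb : 0 < b) :
    ∫ x in Ioo (0:ℝ) 1, x ^ (a - 1) * (1 - x) ^ (b - 1) =
      Gamma a * Gamma b / Gamma (a + b) := by
  have hB : Complex.betaIntegral a b =
      ((∫ x in Ioo (0:ℝ) 1, x ^ (a - 1) * (1 - x) ^ (b - 1) : ℝ) : ℂ) := by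
    rw [Complex.betaIntegral, intervalIntegral.integral_of_le zero_le_one,
      integral_Ioc_eq_integral_Ioo, ← integral_complex_ofReal]
    refine setIntegral_congr_fun measurableSet_Ioo fun x ⟨hx0, hx1⟩ => ?_
    push_cast [Complex.ofReal_cpow hx0.le, Complex.ofReal_cpow (sub_pos.2 hx1).le]
    ring_nf
  have hG := Complex.Gamma_mul_Gamma_eq_betaIntegral (s := a) (t := b) (by simpa) (by simpa)
  rw [hB, ← Complex.ofReal_add, Complex.Gamma_ofReal, Complex.Gamma_ofReal,
    Complex.Gamma_ofReal] at hG
  rw [eq_div_iff (Gamma_pos_of_pos (add_pos ha hb)).ne', mul_comm]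
  exact_mod_cast hG.symm

theorem integral_comp_rpow_Ioo_zero_one {E : Type*} [NormedAddCommGroup E] [NormedSpace ℝ E]
    {g : ℝ → E} {p : ℝ} (hp : 0 < p) :
    ∫ x in Ioo (0:ℝ) 1, (p * x ^ (p - 1)) • g (x ^ p) = ∫ y in Ioo (0:ℝ) 1, g y := by
  have himage : (· ^ p) '' Ioo (0:ℝ) 1 = Ioo 0 1 := by
    ext y
    refine ⟨?_, fun ⟨hy0, hy1⟩ =>
      ⟨y ^ p⁻¹, ⟨by positivity, rpow_lt_one hy0.le hy1 (by positivity)⟩, ?_⟩⟩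
    · rintro ⟨x, ⟨hx0, hx1⟩, rfl⟩
      exact ⟨by positivity, rpow_lt_one hx0.le hx1 hp⟩
    · simp [← rpow_mul hy0.le, inv_mul_cancel₀ hp.ne']
  have h := integral_image_eq_integral_abs_deriv_smul measurableSet_Ioo
    (fun x hx => (hasDerivAt_rpow_const (Or.inl hx.1.ne')).hasDerivWithinAt)
    ((rpow_left_injOn hp.ne').mono fun x (hx : x ∈ Ioo (0:ℝ) 1) => hx.1.le) g
  rw [himage] at h
  rw [h]
  refine setIntegral_congr_fun measurableSet_Ioo fun x ⟨hx0, _⟩ => ?_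
  rw [abs_of_pos (by positivity)]

theorem integral_Ioi_eq_integral_comp_div_one_sub {E : Type*} [NormedAddCommGroup E]
    [NormedSpace ℝ E] (g : ℝ → E) :
    ∫ u in Ioi (0:ℝ), g u = ∫ s in Ioo (0:ℝ) 1, ((1 - s) ^ 2)⁻¹ • g (s / (1 - s)) := by
  have himage : (fun s : ℝ => s / (1 - s)) '' Ioo 0 1 = Ioi 0 := by
    ext u
    refine ⟨fun ⟨s, ⟨hs0, hs1⟩, hu⟩ => hu ▸ div_pos hs0 (sub_pos.2 hs1), fun (hu : 0 < u) => ?_⟩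
    have h1u : 1 + u ≠ 0 := by positivity
    refine ⟨u / (1 + u), ⟨by positivity, (div_lt_one (by positivity)).2 (by linarith)⟩, ?_⟩
    field_simp
    ring
  have hderiv : ∀ s ∈ Ioo (0:ℝ) 1,
      HasDerivWithinAt (fun s : ℝ => s / (1 - s)) ((1 - s) ^ 2)⁻¹ (Ioo 0 1) s := by
    intro s ⟨_, hs1⟩
    have h1s : (1:ℝ) - s ≠ 0 := (sub_pos.2 hs1).ne'
    refine ((hasDerivAt_id' s).div ((hasDerivAt_id' s).const_sub 1) h1s).hasDerivWithinAt
      |>.congr_deriv ?_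
    field_simp
    ring
  have hinj : InjOn (fun s : ℝ => s / (1 - s)) (Ioo 0 1) := by
    intro x ⟨_, hx1⟩ y ⟨_, hy1⟩ h
    have := sub_pos.2 hx1
    have := sub_pos.2 hy1
    field_simp at h
    linarith
  have h := integral_image_eq_integral_abs_deriv_smul measurableSet_Ioo hderiv hinj g
  rw [himage] at h
  rw [h]
  refine setIntegral_congr_fun measurableSet_Ioo fun s _ => ?_
  rw [abs_of_nonneg (by positivity)]

theorem integral_Ioi_rpow_mul_one_add_rpow {a b : ℝ} (ha : 0 < a) (hb : 0 < b) :
    ∫ u in Ioi (0:ℝ), u ^ (a - 1) * (1 + u) ^ (-(a + b)) =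
      Gamma a * Gamma b / Gamma (a + b) := by
  rw [integral_Ioi_eq_integral_comp_div_one_sub, ← integral_Ioo_rpow_mul_one_sub_rpow ha hb]
  refine setIntegral_congr_fun measurableSet_Ioo fun s ⟨hs0, hs1⟩ => ?_
  have h1s : 0 < 1 - s := sub_pos.2 hs1
  have hexp : (1 - s) ^ (b - 1) * (1 - s) ^ (a - 1) * (1 - s) ^ 2 = (1 - s) ^ (a + b) := by
    rw [← rpow_natCast, ← rpow_add h1s, ← rpow_add h1s]
    ring_nf
  rw [smul_eq_mul, div_rpow hs0.le h1s.le, show 1 + s / (1 - s) = (1 - s)⁻¹ by field_simp; ring,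
    inv_rpow h1s.le, rpow_neg h1s.le, inv_inv, ← hexp]
  field_simp

theorem rpow_sub_one_mul_rpow_rpow_inv_sub_one {p x : ℝ} (hp : 0 < p) (hx : 0 < x) :
    x ^ (p - 1) * (x ^ p) ^ (p⁻¹ - 1) = 1 := by
  rw [← rpow_mul hx.le, ← rpow_add hx, mul_sub, mul_inv_cancel₀ hp.ne', mul_one,
    sub_add_sub_cancel', sub_self, rpow_zero]

theorem mul_intervalIntegral_one_sub_rpow {p b : ℝ} (hp : 0 < p) (hb : 0 < b) :
    p * ∫ x in (0:ℝ)..1, (1 - x ^ p) ^ (b - 1) = Gamma p⁻¹ * Gamma b / Gamma (p⁻¹ + b) := by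
  rw [intervalIntegral.integral_of_le zero_le_one, integral_Ioc_eq_integral_Ioo,
    ← integral_Ioo_rpow_mul_one_sub_rpow (inv_pos.2 hp) hb,
    ← integral_comp_rpow_Ioo_zero_one (g := fun u => u ^ (p⁻¹ - 1) * (1 - u) ^ (b - 1)) hp,
    ← integral_const_mul]
  refine setIntegral_congr_fun measurableSet_Ioo fun x ⟨hx0, _⟩ => ?_
  rw [smul_eq_mul]
  linear_combination (-(p * (1 - x ^ p) ^ (b - 1))) * rpow_sub_one_mul_rpow_rpow_inv_sub_one hp hx0

theorem mul_integral_Ioi_one_add_rpow {p b : ℝ} (hp : 0 < p) (hb : 0 < b) :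
    p * ∫ t in Ioi (0:ℝ), (1 + t ^ p) ^ (-(p⁻¹ + b)) = Gamma p⁻¹ * Gamma b / Gamma (p⁻¹ + b) := by
  rw [← integral_Ioi_rpow_mul_one_add_rpow (inv_pos.2 hp) hb,
    ← integral_comp_rpow_Ioi_of_pos (g := fun u => u ^ (p⁻¹ - 1) * (1 + u) ^ (-(p⁻¹ + b))) hp,
    ← integral_const_mul]
  refine setIntegral_congr_fun measurableSet_Ioi fun x (hx : 0 < x) => ?_
  rw [smul_eq_mul]
  linear_combination
    (-(p * (1 + x ^ p) ^ (-(p⁻¹ + b)))) * rpow_sub_one_mul_rpow_rpow_inv_sub_one hp hx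

theorem cos_add_sin_mul_cot (x : ℝ) {y : ℝ} (hy : sin y ≠ 0) :
    cos x + sin x * cot y = sin (x + y) / sin y := by
  rw [cot_eq_cos_div_sin, sin_add]
  field_simp
  ring

theorem sin_pi_mul_pos {s : ℝ} (h0 : 0 < s) (h1 : s < 1) : 0 < sin (π * s) :=
  sin_pos_of_pos_of_lt_pi (by positivity) (mul_lt_of_lt_one_right pi_pos h1)

theorem sin_pi_mul_mul_Gamma_div_Gamma_one_sub_comm {b c : ℝ} (hb : sin (π * b) ≠ 0)
    (hc : sin (π * c) ≠ 0) :
    sin (π * b) * (Gamma b / Gamma (1 - c)) = sin (π * c) * (Gamma c / Gamma (1 - b)) := by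
  have reflection {s : ℝ} (hs : sin (π * s) ≠ 0) :
      sin (π * s) * Gamma s * Gamma (1 - s) = π := by
    rw [mul_assoc, Gamma_mul_Gamma_one_sub]
    field_simp
  have hΓ {s : ℝ} (hs : sin (π * s) ≠ 0) : Gamma (1 - s) ≠ 0 := fun h =>
    pi_ne_zero (by simpa [h] using (reflection hs).symm)
  field_simp [hΓ hb, hΓ hc]
  linear_combination reflection hb - reflection hc

theorem sin_div_sin_mul_integral_one_sub_rpow {p b c : ℝ} (hp : 0 < p) (hb : 0 < b) (hc : 0 < c)
    (hbc : p⁻¹ + b + c = 1) :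
    sin (π * b) / sin (π * c) * ∫ x in (0:ℝ)..1, (1 - x ^ p) ^ (b - 1) =
      ∫ t in Ioi (0:ℝ), (1 + t ^ p) ^ (b - 1) := by
  have hp_inv := inv_pos.2 hp
  have hsin_c := sin_pi_mul_pos hc (by linarith)
  have hφ := mul_intervalIntegral_one_sub_rpow hp hb
  have hI := mul_integral_Ioi_one_add_rpow hp hc
  rw [show p⁻¹ + b = 1 - c by linear_combination hbc] at hφ
  rw [show -(p⁻¹ + c) = b - 1 by linear_combination -hbc, show p⁻¹ + c = 1 - b by
    linear_combination hbc] at hI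
  rw [div_mul_eq_mul_div, div_eq_iff hsin_c.ne']
  refine mul_left_cancel₀ hp.ne' ?_
  linear_combination sin (π * b) * hφ - sin (π * c) * hI + Gamma p⁻¹ *
    sin_pi_mul_mul_Gamma_div_Gamma_one_sub_comm (sin_pi_mul_pos hb (by linarith)).ne' hsin_c.ne'

theorem stmt_17_general (n : ℕ) (k : ℝ) (hk1 : 1 < k) (hkn : k < n)
    (φ : ℝ) (hφ : φ = ∫ x in (0:ℝ)..1, (1 - x ^ (n:ℝ)) ^ (-(k / n))) :
    0 < Real.cos (Real.pi / n) +
        Real.sin (Real.pi / n) * Real.cot ((k - 1) * Real.pi / n) ∧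
    (Real.cos (Real.pi / n) +
        Real.sin (Real.pi / n) * Real.cot ((k - 1) * Real.pi / n)) * φ =
      ∫ t in Set.Ioi (0:ℝ), (1 + t ^ (n:ℝ)) ^ (-(k / n)) := by
  have hn : (0:ℝ) < n := by linarith
  have hb : 0 < 1 - k / n := sub_pos.2 ((div_lt_one hn).2 hkn)
  have hc : 0 < (k - 1) / n := div_pos (sub_pos.2 hk1) hn
  have hbc : (n:ℝ)⁻¹ + (1 - k / n) + (k - 1) / n = 1 := by
    field_simp
    ring
  have hsin_b := sin_pi_mul_pos hb (by linarith [inv_pos.2 hn])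
  have hsin_c := sin_pi_mul_pos hc (by linarith [inv_pos.2 hn])
  have htrig : cos (π / n) + sin (π / n) * cot ((k - 1) * π / n) =
      sin (π * (1 - k / n)) / sin (π * ((k - 1) / n)) := by
    rw [show (k - 1) * π / n = π * ((k - 1) / n) by ring, cos_add_sin_mul_cot _ hsin_c.ne',
      show π / n + π * ((k - 1) / n) = π - π * (1 - k / n) by ring, sin_pi_sub]
  refine ⟨htrig ▸ div_pos hsin_b hsin_c, ?_⟩
  rw [htrig, hφ, show -(k / n) = 1 - k / n - 1 by ring]
  exact sin_div_sin_mul_integral_one_sub_rpow hn hb hc hbc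

theorem stmt_17 (n : ℕ) (hn : 3 ≤ n) (k : ℝ) (hk1 : 1 < k) (hkn : k < n)
    (φ : ℝ) (hφ : φ = ∫ x in (0:ℝ)..1, (1 - x ^ (n:ℝ)) ^ (-(k / n))) :
    0 < Real.cos (Real.pi / n) +
        Real.sin (Real.pi / n) * Real.cot ((k - 1) * Real.pi / n) ∧
    (Real.cos (Real.pi / n) +
        Real.sin (Real.pi / n) * Real.cot ((k - 1) * Real.pi / n)) * φ =
      ∫ t in Set.Ioi (0:ℝ), (1 + t ^ (n:ℝ)) ^ (-(k / n)) :=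
  stmt_17_general n k hk1 hkn φ hφ
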